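/- Fix a vertex v of G with |L_v| ≥ deg(v) + 1. Then the conditional probability Pr[∀ u ∈ N(v) : c_u ≠ c_v | c_v ≠ 0] is strictly greater than 1/2. -/

import Mathlib

open MeasureTheory ProbabilityTheory ENNReal

/-! Conditioning on `c v ≠ 0` doubles probabilities, since `P(c v ≠ 0) = 1/2`. Almost surely
`c v ∈ {0} ∪ L v`, so a collision of `v` with a neighbour `u` while `c v ≠ 0` means
`c u = c v = x` for some `x ∈ L v`; by independence this has probability at most
`P(c u ∈ L v) / (2|L v|) ≤ 1 / (4|L v|)`. A union bound over the `deg v < |L v|` neighbours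
keeps the conditional probability of any collision below `1/2`. -/

theorem ENNReal.natCast_mul_one_div_two_mul {k : ℕ} (hk : k ≠ 0) :
    (k : ℝ≥0∞) * (1 / (2 * k)) = 1 / 2 := by
  rw [mul_one_div]
  simpa using ENNReal.mul_div_mul_right 1 2 (c := k) (by simpa) (natCast_ne_top k)

theorem ENNReal.natCast_mul_one_div_two_mul_lt {n k : ℕ} (h : n < k) :
    (n : ℝ≥0∞) * (1 / (2 * k)) < 1 / 2 := by
  rw [← ENNReal.natCast_mul_one_div_two_mul (Nat.ne_zero_of_lt h)]
  gcongr
  · exact (ENNReal.div_pos one_ne_zero (mul_ne_top ofNat_ne_top (natCast_ne_top k))).ne'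
  · simpa using Nat.ne_zero_of_lt h

theorem MeasureTheory.half_lt_measure_of_measure_compl_lt_half {Ω : Type*} [MeasurableSpace Ω]
    {μ : Measure Ω} [IsProbabilityMeasure μ] {s : Set Ω} (h : μ sᶜ < 1 / 2) :
    1 / 2 < μ s := by
  by_contra! hs
  have hlt : μ s + μ sᶜ < 1 / 2 + 1 / 2 := ENNReal.add_lt_add_of_le_of_lt (by simp) hs h
  rw [ENNReal.add_halves, ← measure_univ (μ := μ)] at hlt
  exact (measure_univ_le_add_compl s).not_gt hlt

section Collision

variable {Ω α : Type*} [MeasurableSpace Ω] [MeasurableSpace α] [MeasurableSingletonClass α]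
  {P : Measure Ω} {X Y : Ω → α}

theorem ProbabilityTheory.IndepFun.measure_eq_and_mem_le (hXY : IndepFun X Y P)
    (hX : Measurable X) (S : Finset α) {p : ℝ≥0∞}
    (hp : ∀ x ∈ S, P {ω | Y ω = x} ≤ p) :
    P {ω | X ω = Y ω ∧ Y ω ∈ S} ≤ P (X ⁻¹' S) * p := by
  calc P {ω | X ω = Y ω ∧ Y ω ∈ S} = P (⋃ x ∈ S, X ⁻¹' {x} ∩ Y ⁻¹' {x}) := by
        congr 1; ext ω; simp [eq_comm (a := Y ω), and_comm]
    _ ≤ ∑ x ∈ S, P (X ⁻¹' {x} ∩ Y ⁻¹' {x}) := measure_biUnion_finset_le _ _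
    _ = ∑ x ∈ S, P (X ⁻¹' {x}) * P (Y ⁻¹' {x}) := Finset.sum_congr rfl fun x _ =>
        hXY.measure_inter_preimage_eq_mul _ _ (measurableSet_singleton x)
          (measurableSet_singleton x)
    _ ≤ ∑ x ∈ S, P (X ⁻¹' {x}) * p := by gcongr with x hx; exact hp x hx
    _ = P (X ⁻¹' S) * p := by
        rw [← Finset.sum_mul,
          sum_measure_preimage_singleton S fun x _ => hX (measurableSet_singleton x)]

theorem MeasureTheory.ae_mem_of_sum_measure_eq_one [IsProbabilityMeasure P]
    (hY : Measurable Y) (S : Finset α) (h : ∑ x ∈ S, P {ω | Y ω = x} = 1) :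
    ∀ᵐ ω ∂P, Y ω ∈ S := by
  change ∑ x ∈ S, P (Y ⁻¹' {x}) = 1 at h
  rwa [sum_measure_preimage_singleton S fun x _ => hY (measurableSet_singleton x),
    ← prob_compl_eq_zero_iff (hY S.measurableSet)] at h

end Collision

section TentativeColor

variable {Ω : Type*} [MeasurableSpace Ω] {P : Measure Ω} [IsProbabilityMeasure P]
  {X Y : Ω → ℕ} {S : Finset ℕ}

theorem measure_ne_zero_eq_half (hX : Measurable X) (hzero : P {ω | X ω = 0} = 1 / 2) :
    P {ω | X ω ≠ 0} = 1 / 2 := by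
  change P {ω | X ω = 0}ᶜ = 1 / 2
  rw [prob_compl_eq_one_sub (s := {ω | X ω = 0}) (hX (measurableSet_singleton 0)), hzero, one_div,
    ENNReal.one_sub_inv_two]

theorem ae_mem_of_ne_zero (hY : Measurable Y) (hS0 : 0 ∉ S) (hS : S.card ≠ 0)
    (hzero : P {ω | Y ω = 0} = 1 / 2) (hcol : ∀ x ∈ S, P {ω | Y ω = x} = 1 / (2 * S.card)) :
    ∀ᵐ ω ∂P, Y ω ≠ 0 → Y ω ∈ S := by
  have hmass : ∑ x ∈ insert 0 S, P {ω | Y ω = x} = 1 := by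
    rw [Finset.sum_insert hS0, hzero, Finset.sum_congr rfl hcol, Finset.sum_const, nsmul_eq_mul,
      ENNReal.natCast_mul_one_div_two_mul hS, ENNReal.add_halves]
  filter_upwards [ae_mem_of_sum_measure_eq_one hY _ hmass] with ω hω hne
  exact (Finset.mem_insert.mp hω).resolve_left hne

theorem cond_eq_le_of_indepFun (hX : Measurable X) (hY : Measurable Y) (hXY : IndepFun X Y P)
    (hS0 : 0 ∉ S) (hS : S.card ≠ 0) (hXzero : P {ω | X ω = 0} = 1 / 2)
    (hYzero : P {ω | Y ω = 0} = 1 / 2)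
    (hYcol : ∀ x ∈ S, P {ω | Y ω = x} = 1 / (2 * S.card)) :
    P[{ω | X ω = Y ω} | {ω | Y ω ≠ 0}] ≤ 1 / (2 * S.card) := by
  have hXS : P (X ⁻¹' S) ≤ 1 / 2 := by
    rw [← measure_ne_zero_eq_half hX hXzero]
    exact measure_mono fun ω hω h0 => hS0 (h0 ▸ hω)
  have hcoll : P ({ω | Y ω ≠ 0} ∩ {ω | X ω = Y ω}) ≤ 1 / 2 * (1 / (2 * S.card)) :=
    calc P ({ω | Y ω ≠ 0} ∩ {ω | X ω = Y ω}) ≤ P {ω | X ω = Y ω ∧ Y ω ∈ S} := by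
          refine measure_mono_ae ?_
          filter_upwards [ae_mem_of_ne_zero hY hS0 hS hYzero hYcol] with ω hω hmem
          exact ⟨hmem.2, hω hmem.1⟩
      _ ≤ P (X ⁻¹' S) * (1 / (2 * S.card)) :=
          hXY.measure_eq_and_mem_le hX S fun x hx => (hYcol x hx).le
      _ ≤ 1 / 2 * (1 / (2 * S.card)) := by gcongr
  have hYne : MeasurableSet {ω | Y ω ≠ 0} := hY (measurableSet_singleton 0).compl
  rw [cond_apply hYne, measure_ne_zero_eq_half hY hYzero]
  calc (1 / 2)⁻¹ * P ({ω | Y ω ≠ 0} ∩ {ω | X ω = Y ω})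
      ≤ (1 / 2)⁻¹ * (1 / 2 * (1 / (2 * S.card))) := by gcongr
    _ = 1 / (2 * S.card) := by
        rw [← mul_assoc, ENNReal.inv_mul_cancel (by simp) (by simp), one_mul]

end TentativeColor

theorem no_collision_conditional_general
    {V : Type*} [Fintype V]
    (G : SimpleGraph V) [DecidableRel G.Adj]
    (L : V → Finset ℕ)
    (hL0 : ∀ u, 0 ∉ L u)
    {Ω : Type*} [MeasurableSpace Ω] (P : Measure Ω) [IsProbabilityMeasure P]
    (c : V → Ω → ℕ)
    (hmeas : ∀ u, Measurable (c u))
    (hindep : iIndepFun c P)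
    (hzero : ∀ u, P {ω | c u ω = 0} = 1 / 2)
    (hcol : ∀ u, ∀ x ∈ L u, P {ω | c u ω = x} = 1 / (2 * ((L u).card : ℝ≥0∞)))
    (v : V)
    (hdeg : G.degree v + 1 ≤ (L v).card) :
    1 / 2 < P[{ω | ∀ u ∈ G.neighborFinset v, c u ω ≠ c v ω} | {ω | c v ω ≠ 0}] := by
  have hcard : (L v).card ≠ 0 := by omega
  have : IsProbabilityMeasure P[|{ω | c v ω ≠ 0}] := cond_isProbabilityMeasure <| by
    rw [measure_ne_zero_eq_half (hmeas v) (hzero v)]; simp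
  refine half_lt_measure_of_measure_compl_lt_half ?_
  calc P[{ω | ∀ u ∈ G.neighborFinset v, c u ω ≠ c v ω}ᶜ | {ω | c v ω ≠ 0}]
      = P[⋃ u ∈ G.neighborFinset v, {ω | c u ω = c v ω} | {ω | c v ω ≠ 0}] := by
        congr 1; ext ω; simp
    _ ≤ ∑ u ∈ G.neighborFinset v, P[{ω | c u ω = c v ω} | {ω | c v ω ≠ 0}] :=
        measure_biUnion_finset_le _ _
    _ ≤ ∑ u ∈ G.neighborFinset v, 1 / (2 * ((L v).card : ℝ≥0∞)) := by
        refine Finset.sum_le_sum fun u hu => ?_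
        have huv : u ≠ v := ((G.mem_neighborFinset v u).mp hu).ne'
        exact cond_eq_le_of_indepFun (hmeas u) (hmeas v) (hindep.indepFun huv) (hL0 v) hcard
          (hzero u) (hzero v) (hcol v)
    _ < 1 / 2 := by
        rw [Finset.sum_const, G.card_neighborFinset_eq_degree, nsmul_eq_mul]
        exact ENNReal.natCast_mul_one_div_two_mul_lt hdeg

/-- **No-collision conditional probability.**
Each vertex `u` of a finite graph `G` has a finite nonempty list `L u ⊆ ℕ ∖ {0}` of colors,
and independently for each vertex, a random tentative color `c u` is sampled: `c u = 0` with
probability `1/2`, and `c u = x` with probability `1/(2·|L u|)` for each `x ∈ L u`.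
If `|L v| ≥ deg(v) + 1`, then `Pr[∀ u ∈ N(v), c u ≠ c v | c v ≠ 0] > 1/2`. -/
theorem no_collision_conditional
    {V : Type*} [Fintype V] [DecidableEq V]
    (G : SimpleGraph V) [DecidableRel G.Adj]
    (L : V → Finset ℕ)
    (hL0 : ∀ u, 0 ∉ L u) (hLne : ∀ u, (L u).Nonempty)
    {Ω : Type*} [MeasurableSpace Ω] (P : Measure Ω) [IsProbabilityMeasure P]
    (c : V → Ω → ℕ)
    (hmeas : ∀ u, Measurable (c u))
    (hindep : iIndepFun c P)
    (hzero : ∀ u, P {ω | c u ω = 0} = 1 / 2)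
    (hcol : ∀ u, ∀ x ∈ L u, P {ω | c u ω = x} = 1 / (2 * ((L u).card : ℝ≥0∞)))
    (v : V)
    (hdeg : G.degree v + 1 ≤ (L v).card) :
    1 / 2 < P[{ω | ∀ u ∈ G.neighborFinset v, c u ω ≠ c v ω} | {ω | c v ω ≠ 0}] :=
  no_collision_conditional_general G L hL0 P c hmeas hindep hzero hcol v hdeg
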